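/- arXiv:2006.16992 — 4 statements merged into one kernel-verified Lean document; each statement's English description precedes it below -/
import Mathlib

section
/- For finitely supported 2D signals, correlation and convolution satisfy the associativity identity α' ⋆ (α * ξ) = (α' ⋆ α) * ξ, where ⋆ denotes correlation and * denotes convolution. -/
/-- 2D convolution: (α * ξ)[i,j] = Σ_{p,q} α[p,q]·ξ[i-p, j-q]. -/
noncomputable def conv (α ξ : ℤ × ℤ → ℝ) : ℤ × ℤ → ℝ :=
  fun z => ∑ᶠ p : ℤ × ℤ, α p * ξ (z.1 - p.1, z.2 - p.2)

/-- 2D correlation: (α ⋆ ξ)[i,j] = Σ_{p,q} α[p,q]·ξ[i+p, j+q]. -/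
noncomputable def corr (α ξ : ℤ × ℤ → ℝ) : ℤ × ℤ → ℝ :=
  fun z => ∑ᶠ p : ℤ × ℤ, α p * ξ (z.1 + p.1, z.2 + p.2)

/-- ℓ² inner product of 2D signals. -/
noncomputable def ip (f g : ℤ × ℤ → ℝ) : ℝ := ∑ᶠ z : ℤ × ℤ, f z * g z

/-- Kronecker delta on ℤ×ℤ. -/
def kdelta : ℤ × ℤ → ℝ := fun z => if z = (0, 0) then 1 else 0

/-! Both sides at `z` equal the double sum `∑ p, ∑ r, α' p * α (r + p) * ξ (z - r)`: the left
one after the substitution `q = r + p` in the inner sum, the right one after swapping the two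
sums, which is legitimate because only the finitely many pairs with `p ∈ supp α'` and
`r + p ∈ supp α` contribute. -/

theorem finsum_comm {α β M : Type*} [AddCommMonoid M] (f : α → β → M)
    (hf : (Function.support (Function.uncurry f)).Finite) :
    ∑ᶠ a, ∑ᶠ b, f a b = ∑ᶠ b, ∑ᶠ a, f a b := by
  have hswap : (Function.support (Function.uncurry f ∘ Prod.swap)).Finite := by
    rw [Function.support_comp_eq_preimage]
    exact hf.preimage Prod.swap_injective.injOn
  calc ∑ᶠ a, ∑ᶠ b, f a b = ∑ᶠ ab, Function.uncurry f ab := (finsum_curry _ hf).symm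
    _ = ∑ᶠ ba, Function.uncurry f (Prod.swap ba) :=
      (finsum_comp_equiv (Equiv.prodComm β α)).symm
    _ = ∑ᶠ b, ∑ᶠ a, f a b := finsum_curry _ hswap

theorem finsum_corr_conv_assoc {G R : Type*} [AddCommGroup G] [NonUnitalSemiring R]
    [NoZeroDivisors R] (a' a x : G → R) (ha' : (Function.support a').Finite)
    (ha : (Function.support a).Finite) (z : G) :
    ∑ᶠ p, a' p * ∑ᶠ q, a q * x (z + p - q) =
      ∑ᶠ r, (∑ᶠ p, a' p * a (r + p)) * x (z - r) := by
  have hshift : ∀ p, ∑ᶠ q, a' p * (a q * x (z + p - q)) =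
      ∑ᶠ r, a' p * (a (r + p) * x (z - r)) := fun p => by
    rw [← finsum_comp_equiv (Equiv.addRight p)]
    simp only [Equiv.coe_addRight, add_sub_add_right_eq_sub]
  have hfin : (Function.support fun pr : G × G =>
      a' pr.1 * (a (pr.2 + pr.1) * x (z - pr.2))).Finite := by
    refine ((ha'.prod ha).preimage
      (Equiv.prodShear (Equiv.refl G) Equiv.addRight).injective.injOn).subset ?_
    rintro ⟨p, r⟩ h
    simp only [Function.mem_support] at h
    exact ⟨left_ne_zero_of_mul h, left_ne_zero_of_mul (right_ne_zero_of_mul h)⟩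
  -- Without zero divisors, `mul_finsum` and `finsum_mul` hold even for infinite supports.
  simp_rw [mul_finsum, hshift, finsum_mul, mul_assoc]
  exact finsum_comm (fun p r => a' p * (a (r + p) * x (z - r))) hfin

theorem corr_conv_assoc_general (α' α ξ : ℤ × ℤ → ℝ)
    (hα' : (Function.support α').Finite) (hα : (Function.support α).Finite) :
    corr α' (conv α ξ) = conv (corr α' α) ξ :=
  funext (finsum_corr_conv_assoc α' α ξ hα' hα)

theorem corr_conv_assoc (α' α ξ : ℤ × ℤ → ℝ)
    (hα' : (Function.support α').Finite) (hα : (Function.support α).Finite)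
    (hξ : (Function.support ξ).Finite) :
    corr α' (conv α ξ) = conv (corr α' α) ξ :=
  corr_conv_assoc_general α' α ξ hα' hα
end

section
/- The multi-channel correlation operator A : x = (ξ_1,…,ξ_C) ↦ (Σ_c α_{1c} ⋆ ξ_c, …, Σ_c α_{Mc} ⋆ ξ_c) is an isometry (⟨Ax, Ax'⟩ = ⟨x, x'⟩ for all x, x') if and only if Σ_{m=1}^M α_{mc} ⋆ α_{mc'} equals the Kronecker delta function δ (value 1 at (0,0), 0 elsewhere) when c = c' and equals 0 when c ≠ c'. -/
/-!
Expanding both correlations and substituting `v = z + p`, `d = q - p` gives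
`⟨α ⋆ ξ, β ⋆ η⟩ = Σ_d (α ⋆ β)[d] · (ξ ⋆ η)[d]`. Summed over the output channels,
`⟨Ax, Ax'⟩ = Σ_{c,c'} Σ_d G_{cc'}[d] · (ξ_c ⋆ ξ'_{c'})[d]` with `G_{cc'} = Σ_m α_{mc} ⋆ α_{mc'}`,
while `⟨x, x'⟩ = Σ_c (ξ_c ⋆ ξ'_c)[0]`. Hence `G_{cc'} = [c = c'] δ` gives the isometry, and
conversely the isometry tested on the unit impulse at `0` in channel `c` against the unit
impulse at `w` in channel `c'` reads off `G_{cc'}[w]`.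
-/

open Function

lemma corr_apply (a x : ℤ × ℤ → ℝ) (z : ℤ × ℤ) :
    corr a x z = ∑ᶠ p : ℤ × ℤ, a p * x (z + p) := rfl

lemma kdelta_eq_single : kdelta = Pi.single 0 1 := by
  funext z
  simp only [kdelta, Pi.single_apply, Prod.mk_zero_zero]

lemma finsum_single_mul {α R : Type*} [DecidableEq α] [NonUnitalNonAssocSemiring R] (u : α)
    (r : R) (f : α → R) : ∑ᶠ p, (Pi.single u r : α → R) p * f p = r * f u := by
  rw [finsum_eq_single _ u fun p hp => by simp [hp]]
  simp

lemma finsum_mul_single {α R : Type*} [DecidableEq α] [NonUnitalNonAssocSemiring R]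
    (f : α → R) (u : α) (r : R) : ∑ᶠ p, f p * (Pi.single u r : α → R) p = f u * r := by
  rw [finsum_eq_single _ u fun p hp => by simp [hp]]
  simp

lemma corr_single_left (u : ℤ × ℤ) (r : ℝ) (y : ℤ × ℤ → ℝ) (z : ℤ × ℤ) :
    corr (Pi.single u r) y z = r * y (z + u) :=
  finsum_single_mul u r _

lemma corr_kdelta_left (y : ℤ × ℤ → ℝ) : corr kdelta y = y := by
  funext z
  rw [kdelta_eq_single, corr_single_left, one_mul, add_zero]

lemma corr_zero_left (y : ℤ × ℤ → ℝ) : corr 0 y = 0 := by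
  funext z
  simp [corr]

lemma ip_eq_corr_zero (x y : ℤ × ℤ → ℝ) : ip x y = corr x y 0 := by
  simp [ip, corr_apply]

lemma support_corr_finite {a x : ℤ × ℤ → ℝ} (ha : (support a).Finite)
    (hx : (support x).Finite) : (support (corr a x)).Finite := by
  refine ((hx.prod ha).image fun u => u.1 - u.2).subset fun z hz => ?_
  rw [mem_support, corr_apply, ← finsum_mem_univ] at hz
  obtain ⟨p, -, hp⟩ := exists_ne_zero_of_finsum_mem_ne_zero hz
  exact ⟨(z + p, p), ⟨right_ne_zero_of_mul hp, left_ne_zero_of_mul hp⟩,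
    add_sub_cancel_right z p⟩

lemma ip_corr_corr {a b x : ℤ × ℤ → ℝ} (ha : (support a).Finite) (hb : (support b).Finite)
    (hx : (support x).Finite) (y : ℤ × ℤ → ℝ) :
    ip (corr a x) (corr b y) = ∑ᶠ d, corr a b d * corr x y d := by
  let F : (ℤ × ℤ) × (ℤ × ℤ) × (ℤ × ℤ) → ℝ := fun ⟨z, p, q⟩ =>
    a p * x (z + p) * (b q * y (z + q))
  have hF : (support F).Finite := by
    refine (((hx.prod ha).image fun u => u.1 - u.2).prod (ha.prod hb)).subset ?_
    rintro ⟨z, p, q⟩ hw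
    simp only [F, mem_support, ne_eq, mul_eq_zero, not_or] at hw
    exact ⟨⟨(z + p, p), ⟨hw.1.2, hw.1.1⟩, add_sub_cancel_right z p⟩,
      hw.1.1, hw.2.1⟩
  -- reindex `(z, p, q)` by `(d, p, v)` where `v = z + p` and `d = q - p`
  let e : (ℤ × ℤ) × (ℤ × ℤ) × (ℤ × ℤ) ≃ (ℤ × ℤ) × (ℤ × ℤ) × (ℤ × ℤ) :=
    { toFun := fun ⟨d, p, v⟩ => (v - p, p, d + p)
      invFun := fun ⟨z, p, q⟩ => (q - p, p, z + p)
      left_inv := fun ⟨d, p, v⟩ => by simp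
      right_inv := fun ⟨z, p, q⟩ => by simp }
  calc ip (corr a x) (corr b y) = ∑ᶠ w, F w := by
        rw [finsum_curry₃ F hF]
        simp_rw [ip, corr_apply, finsum_mul, mul_finsum]
        rfl
    _ = ∑ᶠ w, F (e w) := (finsum_comp_equiv e).symm
    _ = ∑ᶠ d, corr a b d * corr x y d := by
        rw [finsum_curry₃ _ (hF.preimage e.injective.injOn)]
        simp_rw [corr_apply, finsum_mul, mul_finsum]
        refine finsum_congr fun d => finsum_congr fun p => finsum_congr fun v => ?_
        simp only [F, e, Equiv.coe_fn_mk, sub_add_cancel, sub_add_add_cancel]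
        rw [add_comm v d]
        ring

lemma ip_sum_sum {ι κ : Type*} (s : Finset ι) (t : Finset κ) {f : ι → ℤ × ℤ → ℝ}
    (hf : ∀ i ∈ s, (support (f i)).Finite) (g : κ → ℤ × ℤ → ℝ) :
    ip (fun z => ∑ i ∈ s, f i z) (fun z => ∑ j ∈ t, g j z)
      = ∑ i ∈ s, ∑ j ∈ t, ip (f i) (g j) := by
  simp_rw [ip, Finset.sum_mul_sum]
  rw [finsum_sum_comm _ _ fun i hi => (hf i hi).subset fun z hz => ?_]
  · refine Finset.sum_congr rfl fun i hi => ?_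
    exact finsum_sum_comm _ _ fun j _ => (hf i hi).subset (support_mul_subset_left _ _)
  · rw [mem_support] at hz ⊢
    contrapose! hz
    simp [hz]

noncomputable def corrGram {ι κ : Type*} [Fintype κ] (α : κ → ι → ℤ × ℤ → ℝ) (c c' : ι) :
    ℤ × ℤ → ℝ :=
  fun z => ∑ m, corr (α m c) (α m c') z

lemma sum_ip_sum_corr {ι κ : Type*} [Fintype ι] [Fintype κ] {α : κ → ι → ℤ × ℤ → ℝ}
    (hα : ∀ m c, (support (α m c)).Finite) {x : ι → ℤ × ℤ → ℝ}
    (hx : ∀ c, (support (x c)).Finite) (x' : ι → ℤ × ℤ → ℝ) :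
    ∑ m, ip (fun z => ∑ c, corr (α m c) (x c) z) (fun z => ∑ c, corr (α m c) (x' c) z)
      = ∑ c, ∑ c', ∑ᶠ d, corrGram α c c' d * corr (x c) (x' c') d := by
  simp_rw [ip_sum_sum _ _ (fun c _ => support_corr_finite (hα _ c) (hx c)),
    ip_corr_corr (hα _ _) (hα _ _) (hx _)]
  rw [Finset.sum_comm]
  refine Finset.sum_congr rfl fun c _ => ?_
  rw [Finset.sum_comm]
  refine Finset.sum_congr rfl fun c' _ => ?_
  rw [sum_finsum_comm _ _ fun m _ =>
    (support_corr_finite (hα m c) (hα m c')).subset (support_mul_subset_left _ _)]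
  simp_rw [corrGram, Finset.sum_mul]

def channelImpulse {ι : Type*} [DecidableEq ι] (c : ι) (w : ℤ × ℤ) : ι → ℤ × ℤ → ℝ :=
  Pi.single c (Pi.single w 1)

lemma support_channelImpulse_finite {ι : Type*} [DecidableEq ι] (c : ι) (w : ℤ × ℤ)
    (i : ι) : (support (channelImpulse c w i)).Finite := by
  rw [channelImpulse, Pi.single_apply]
  split_ifs
  · exact (Set.finite_singleton w).subset Pi.support_single_subset
  · simp

lemma sum_finsum_mul_corr_channelImpulse {ι : Type*} [Fintype ι] [DecidableEq ι]
    (G : ι → ι → ℤ × ℤ → ℝ) (c c' : ι) (w : ℤ × ℤ) :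
    ∑ i, ∑ j, ∑ᶠ d, G i j d * corr (channelImpulse c 0 i) (channelImpulse c' w j) d
      = G c c' w := by
  rw [Fintype.sum_eq_single c fun i hi => by simp [channelImpulse, hi, corr_zero_left],
    Fintype.sum_eq_single c' fun j hj => by simp [channelImpulse, hj, corr]]
  simp [channelImpulse, corr_single_left, finsum_mul_single]

lemma sum_ip_channelImpulse {ι : Type*} [Fintype ι] [DecidableEq ι] (c c' : ι) (w : ℤ × ℤ) :
    ∑ i, ip (channelImpulse c 0 i) (channelImpulse c' w i)
      = (if c = c' then kdelta else 0) w := by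
  rw [Fintype.sum_eq_single c fun i hi => by simp [channelImpulse, hi, ip]]
  rw [channelImpulse, Pi.single_eq_same, ip_eq_corr_zero, ← kdelta_eq_single,
    corr_kdelta_left]
  split_ifs with h
  · subst h; simp [channelImpulse, kdelta_eq_single, Pi.single_apply, eq_comm]
  · simp [channelImpulse, Ne.symm h]

lemma sum_finsum_ite_kdelta_mul_corr {ι : Type*} [Fintype ι] [DecidableEq ι]
    (x x' : ι → ℤ × ℤ → ℝ) :
    ∑ c, ∑ c', ∑ᶠ d, (if c = c' then kdelta else 0) d * corr (x c) (x' c') d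
      = ∑ c, ip (x c) (x' c) := by
  refine Finset.sum_congr rfl fun c _ => ?_
  rw [Fintype.sum_eq_single c fun c' hc' => by simp [Ne.symm hc']]
  simp [kdelta_eq_single, finsum_single_mul, ip_eq_corr_zero]

theorem isometry_iff_orthogonal_kernel (C M : ℕ) (α : Fin M → Fin C → ℤ × ℤ → ℝ)
    (hα : ∀ m c, (Function.support (α m c)).Finite) :
    (∀ x x' : Fin C → ℤ × ℤ → ℝ,
      (∀ c, (Function.support (x c)).Finite) → (∀ c, (Function.support (x' c)).Finite) →
      ∑ m : Fin M, ip (fun z => ∑ c : Fin C, corr (α m c) (x c) z)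
          (fun z => ∑ c : Fin C, corr (α m c) (x' c) z)
        = ∑ c : Fin C, ip (x c) (x' c))
    ↔ (∀ c c' : Fin C,
        (fun z => ∑ m : Fin M, corr (α m c) (α m c') z)
          = if c = c' then kdelta else 0) := by
  constructor
  · intro hiso c c'
    funext w
    have hδ := support_channelImpulse_finite c 0
    have hiso_δ := hiso _ _ hδ (support_channelImpulse_finite c' w)
    rwa [sum_ip_sum_corr hα hδ, sum_finsum_mul_corr_channelImpulse,
      sum_ip_channelImpulse] at hiso_δ
  · intro horth x x' hx _
    have hG : ∀ c c', corrGram α c c' = if c = c' then kdelta else 0 := horth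
    simp_rw [sum_ip_sum_corr hα hx, hG]
    exact sum_finsum_ite_kdelta_mul_corr x x'
end

section
/- The adjoint A* : y = (η_1,…,η_M) ↦ (Σ_m α_{m1} * η_m, …, Σ_m α_{mC} * η_m) of the multi-channel correlation operator is an isometry if and only if Σ_{c=1}^C α_{mc} ⋆ α_{m'c} equals the Kronecker delta δ when m = m' and 0 when m ≠ m'. -/
/-!
Finitely supported signals on `ℤ × ℤ` are the group algebra `ℝ[ℤ × ℤ]`: convolution is the
product, the correlation `α ⋆ β` is `ρ α * β` for the reflection `ρ` induced by `g ↦ -g`, and the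
inner product `⟨f, g⟩` is the coefficient at `0` of `ρ f * g`. With `B c m := α m c` the operator
`A*` is `y ↦ B *ᵥ y`, so `⟨A* y, A* y'⟩ = ⟨y, K y'⟩` for the Gram matrix `K := (ρ B)ᵀ * B`, whose
entries are the sums `∑ c, α m c ⋆ α m' c`. Hence `A*` is an isometry iff `⟨y, K y'⟩ = ⟨y, y'⟩`
for all `y, y'`, and testing on unit impulses `y = δ_w e_m`, `y' = e_m'` reads off every
coefficient of `K`, forcing `K = 1`.
-/

open AddMonoidAlgebra Matrix

section Reflection

variable {R G : Type*} [Semiring R] [AddCommGroup G]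

variable (R G) in
noncomputable def reflection : R[G] ≃+* R[G] := mapDomainRingEquiv R (AddEquiv.neg G)

lemma coeff_reflection (x : R[G]) (g : G) : (reflection R G x).coeff g = x.coeff (-g) := by
  simp [reflection, Finsupp.equivMapDomain_apply]

lemma coeff_mul_eq_finsum (x y : R[G]) (g : G) :
    (x * y).coeff g = ∑ᶠ h, x.coeff h * y.coeff (g - h) := by
  rw [coeff_mul_apply_left, Finsupp.sum, finsum_eq_sum_of_support_subset (s := x.coeff.support)]
  · simp_rw [neg_add_eq_sub]
  · exact (Function.support_mul_subset_left _ _).trans (by simp)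

lemma coeff_reflection_mul (x y : R[G]) (g : G) :
    (reflection R G x * y).coeff g = ∑ᶠ h, x.coeff h * y.coeff (g + h) := by
  rw [coeff_mul_eq_finsum, ← finsum_comp_equiv (Equiv.neg G)]
  simp [coeff_reflection]

lemma coeff_zero_reflection_single_one_mul (g : G) (x : R[G]) :
    (reflection R G (single g 1) * x).coeff 0 = x.coeff g := by
  simp [reflection]

lemma eq_of_forall_coeff_zero_dotProduct_mulVec {ι : Type*} [Fintype ι] [DecidableEq ι]
    {K L : Matrix ι ι R[G]}
    (h : ∀ y y' : ι → R[G], ((reflection R G ∘ y) ⬝ᵥ (K *ᵥ y')).coeff 0 =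
      ((reflection R G ∘ y) ⬝ᵥ (L *ᵥ y')).coeff 0) : K = L := by
  ext m m' : 1
  refine coeff_injective (Finsupp.ext fun g => ?_)
  have hy : reflection R G ∘ Pi.single m (single g 1) =
      Pi.single m (reflection R G (single g 1)) := by
    funext i; by_cases hi : i = m <;> simp [hi]
  simpa [hy, mulVec_single_one, single_dotProduct, coeff_zero_reflection_single_one_mul]
    using h (Pi.single m (single g 1)) (Pi.single m' 1)

end Reflection

lemma comp_mulVec_dotProduct_mulVec {R ι κ F : Type*} [CommSemiring R] [Fintype ι] [Fintype κ]
    [FunLike F R R] [RingHomClass F R R] (σ : F) (B : Matrix κ ι R) (y y' : ι → R) :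
    (σ ∘ (B *ᵥ y)) ⬝ᵥ (B *ᵥ y') = (σ ∘ y) ⬝ᵥ (((B.map σ)ᵀ * B) *ᵥ y') := by
  have hσ : σ ∘ (B *ᵥ y) = B.map σ *ᵥ (σ ∘ y) := funext (RingHom.map_mulVec (σ : R →+* R) B y)
  rw [hσ, ← mulVec_mulVec, dotProduct_mulVec (σ ∘ y), vecMul_transpose]

lemma forall₂_support_finite_iff {R G ι : Type*} [Semiring R]
    {P : (ι → G → R) → (ι → G → R) → Prop} :
    (∀ y y' : ι → G → R, (∀ m, (Function.support (y m)).Finite) →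
      (∀ m, (Function.support (y' m)).Finite) → P y y') ↔
    ∀ y y' : ι → R[G], P (fun m => (y m).coeff) (fun m => (y' m).coeff) :=
  ⟨fun h y y' => h _ _ (fun m => (y m).coeff.hasFiniteSupport)
    (fun m => (y' m).coeff.hasFiniteSupport),
  fun h y y' hy hy' => h (fun m => ofCoeff (.ofSupportFinite (y m) (hy m)))
    (fun m => ofCoeff (.ofSupportFinite (y' m) (hy' m)))⟩

lemma conv_coeff_eq_coeff_mul (x y : ℝ[ℤ × ℤ]) : conv x.coeff y.coeff = (x * y).coeff := by
  funext z; rw [conv, coeff_mul_eq_finsum]; rfl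

lemma corr_coeff_eq_coeff_reflection_mul (x y : ℝ[ℤ × ℤ]) :
    corr x.coeff y.coeff = (reflection ℝ _ x * y).coeff := by
  funext z; rw [corr, coeff_reflection_mul]; rfl

lemma ip_coeff_eq_coeff_reflection_mul (x y : ℝ[ℤ × ℤ]) :
    ip x.coeff y.coeff = (reflection ℝ _ x * y).coeff 0 := by
  rw [ip, coeff_reflection_mul]; simp

lemma kdelta_eq_coeff_one : kdelta = (1 : ℝ[ℤ × ℤ]).coeff := by
  funext z; simp [kdelta, one_def, Finsupp.single_apply, eq_comm, Prod.mk_zero_zero]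

lemma sum_conv_coeff_eq_coeff_mulVec {ι κ : Type*} [Fintype ι] (B : Matrix κ ι ℝ[ℤ × ℤ])
    (y : ι → ℝ[ℤ × ℤ]) (c : κ) :
    (fun z => ∑ m, conv (B c m).coeff (y m).coeff z) = ((B *ᵥ y) c).coeff := by
  funext z
  simp [conv_coeff_eq_coeff_mul, mulVec, dotProduct, coeff_sum, Finsupp.finsetSum_apply]

lemma sum_ip_coeff_eq_coeff_dotProduct {ι : Type*} [Fintype ι] (u v : ι → ℝ[ℤ × ℤ]) :
    ∑ m, ip (u m).coeff (v m).coeff = ((reflection ℝ _ ∘ u) ⬝ᵥ v).coeff 0 := by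
  simp [ip_coeff_eq_coeff_reflection_mul, dotProduct, coeff_sum, Finsupp.finsetSum_apply]

lemma sum_corr_coeff_eq_coeff_mul {ι κ : Type*} [Fintype κ] (B : Matrix κ ι ℝ[ℤ × ℤ])
    (m m' : ι) :
    (fun z => ∑ c, corr (B c m).coeff (B c m').coeff z) =
      (((B.map (reflection ℝ _))ᵀ * B) m m').coeff := by
  funext z
  simp [corr_coeff_eq_coeff_reflection_mul, Matrix.mul_apply, coeff_sum, Finsupp.finsetSum_apply]

theorem adjoint_isometry_iff_coorthogonal_kernel (C M : ℕ)
    (α : Fin M → Fin C → ℤ × ℤ → ℝ)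
    (hα : ∀ m c, (Function.support (α m c)).Finite) :
    (∀ y y' : Fin M → ℤ × ℤ → ℝ,
      (∀ m, (Function.support (y m)).Finite) → (∀ m, (Function.support (y' m)).Finite) →
      ∑ c : Fin C, ip (fun z => ∑ m : Fin M, conv (α m c) (y m) z)
          (fun z => ∑ m : Fin M, conv (α m c) (y' m) z)
        = ∑ m : Fin M, ip (y m) (y' m))
    ↔ (∀ m m' : Fin M,
        (fun z => ∑ c : Fin C, corr (α m c) (α m' c) z)
          = if m = m' then kdelta else 0) := by
  obtain ⟨B, rfl⟩ : ∃ B : Matrix (Fin C) (Fin M) ℝ[ℤ × ℤ], α = fun m c => ⇑(B c m).coeff :=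
    ⟨fun c m => ofCoeff (.ofSupportFinite _ (hα m c)), rfl⟩
  have hδ : ∀ m m' : Fin M,
      (if m = m' then kdelta else 0) = ((1 : Matrix (Fin M) (Fin M) ℝ[ℤ × ℤ]) m m').coeff := by
    intro m m'; rcases eq_or_ne m m' with rfl | h <;> simp [*, kdelta_eq_coeff_one]
  simp only [forall₂_support_finite_iff, sum_conv_coeff_eq_coeff_mulVec,
    sum_ip_coeff_eq_coeff_dotProduct, comp_mulVec_dotProduct_mulVec,
    sum_corr_coeff_eq_coeff_mul, hδ, DFunLike.coe_fn_eq, coeff_inj, Matrix.ext_iff]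
  constructor
  · intro h
    exact eq_of_forall_coeff_zero_dotProduct_mulVec (by simpa only [one_mulVec] using h)
  · rintro h y y'
    rw [h, one_mulVec]
end

section
/- Let A ∈ ℝ^{M×(Ck²)} be the matrix obtained by flattening a convolution kernel, and suppose the rows of A are orthonormal (condition (13)). If additionally M = C and k = 1, then row-orthonormality of the flattened kernel is equivalent to the operator orthogonality condition Σ_c α_{mc} ⋆ α_{m'c} = δ·1_{m=m'}. For k > 1 row-orthonormality of the flattened kernel is necessary but in general not sufficient for operator orthogonality. -/
lemma corr_zero (f g : ℤ × ℤ → ℝ) : corr f g ((0 : ℤ), (0 : ℤ)) = ∑ᶠ p : ℤ × ℤ, f p * g p := by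
  unfold corr
  exact finsum_congr fun p => by simp

lemma finsum_single (f g : ℤ × ℤ → ℝ) (hf : Function.support f ⊆ {((0:ℤ),(0:ℤ))}) :
    ∑ᶠ z : ℤ × ℤ, f z * g z = f (0,0) * g (0,0) := by
  refine finsum_eq_single _ ((0,0) : ℤ × ℤ) fun p hp => ?_
  have : f p = 0 := by
    by_contra h
    exact hp (hf h)
  simp [this]

lemma corr_single (f g : ℤ × ℤ → ℝ) (hf : Function.support f ⊆ {((0:ℤ),(0:ℤ))}) (z : ℤ × ℤ) :
    corr f g z = f (0,0) * g z := by
  unfold corr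
  rw [finsum_eq_single _ ((0,0) : ℤ × ℤ)]
  · simp
  · intro p hp
    have : f p = 0 := by
      by_contra h
      exact hp (hf h)
    simp [this]

lemma necessity (M C : ℕ) (α : Fin M → Fin C → ℤ × ℤ → ℝ)
    (hop : ∀ m m' : Fin M,
      (fun z => ∑ c : Fin C, corr (α m c) (α m' c) z) = if m = m' then kdelta else 0) :
    ∀ m m' : Fin M,
      ∑ c : Fin C, (∑ᶠ z : ℤ × ℤ, α m c z * α m' c z) = if m = m' then 1 else 0 := by
  intro m m'
  have h := congrFun (hop m m') ((0,0) : ℤ × ℤ)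
  simp only [corr_zero] at h
  rcases eq_or_ne m m' with he | he
  · simpa [he, kdelta] using h
  · simpa [he, kdelta] using h

noncomputable def cef : ℤ × ℤ → ℝ :=
  fun z => if z = (0,0) ∨ z = (0,1) then Real.sqrt 2⁻¹ else 0

lemma cef_supp : Function.support cef ⊆ (({((0:ℤ),(0:ℤ)), (0,1)} : Finset (ℤ × ℤ)) : Set (ℤ × ℤ)) := by
  intro z hz
  simp only [Function.mem_support, cef] at hz
  split_ifs at hz with h
  · simpa using h
  · exact absurd rfl hz

lemma cef_sq : (Real.sqrt 2)⁻¹ * (Real.sqrt 2)⁻¹ = 2⁻¹ := by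
  rw [← mul_inv, Real.mul_self_sqrt (by norm_num : (0:ℝ) ≤ 2)]

lemma cef_ip : ∑ᶠ z : ℤ × ℤ, cef z * cef z = 1 := by
  rw [finsum_eq_sum_of_support_subset _ (s := {((0:ℤ),(0:ℤ)), (0,1)})
      (fun z hz => cef_supp (by simpa [Function.mem_support] using fun h : cef z = 0 => hz (by simp [h])))]
  rw [Finset.sum_pair (by decide)]
  simp only [cef]
  norm_num [Real.sqrt_inv, cef_sq]

lemma cef_corr : corr cef cef (0,1) = 2⁻¹ := by
  unfold corr
  rw [finsum_eq_sum_of_support_subset _ (s := {((0:ℤ),(0:ℤ)), (0,1)})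
      (fun p hp => cef_supp (by
        simp only [Function.mem_support] at hp ⊢
        intro h
        exact hp (by simp [h])))]
  rw [Finset.sum_pair (by decide)]
  have h2 : cef ((0:ℤ),(2:ℤ)) = 0 := by simp [cef]
  simp only [cef]
  norm_num [Real.sqrt_inv, cef_sq, h2]

theorem flattened_vs_operator_orthogonality :
    (∀ (C : ℕ) (α : Fin C → Fin C → ℤ × ℤ → ℝ),
      (∀ m c, Function.support (α m c) ⊆ {(0, 0)}) →
      ((∀ m m' : Fin C,
          ∑ c : Fin C, (∑ᶠ z : ℤ × ℤ, α m c z * α m' c z)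
            = if m = m' then 1 else 0)
        ↔ (∀ m m' : Fin C,
            (fun z => ∑ c : Fin C, corr (α m c) (α m' c) z)
              = if m = m' then kdelta else 0)))
    ∧ (∀ (M C : ℕ) (α : Fin M → Fin C → ℤ × ℤ → ℝ),
        (∀ m c, (Function.support (α m c)).Finite) →
        (∀ m m' : Fin M,
          (fun z => ∑ c : Fin C, corr (α m c) (α m' c) z)
            = if m = m' then kdelta else 0) →
        (∀ m m' : Fin M,
          ∑ c : Fin C, (∑ᶠ z : ℤ × ℤ, α m c z * α m' c z)
            = if m = m' then 1 else 0))
    ∧ (∃ (M C : ℕ) (α : Fin M → Fin C → ℤ × ℤ → ℝ),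
        (∀ m c, (Function.support (α m c)).Finite) ∧
        (∀ m m' : Fin M,
          ∑ c : Fin C, (∑ᶠ z : ℤ × ℤ, α m c z * α m' c z)
            = if m = m' then 1 else 0) ∧
        ¬ (∀ m m' : Fin M,
            (fun z => ∑ c : Fin C, corr (α m c) (α m' c) z)
              = if m = m' then kdelta else 0)) := by
  refine ⟨?_, ?_, ?_⟩
  · intro C α hsupp
    constructor
    · intro hflat m m'
      funext z
      have hl : ∑ c : Fin C, corr (α m c) (α m' c) z
          = ∑ c : Fin C, α m c (0,0) * α m' c z :=
        Finset.sum_congr rfl fun c _ => corr_single _ _ (hsupp m c) z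
      rcases eq_or_ne z ((0,0) : ℤ × ℤ) with hz | hz
      · subst hz
        have hf := hflat m m'
        simp only [finsum_single _ _ (hsupp m _)] at hf
        rw [hl, hf]
        rcases eq_or_ne m m' with he | he <;> simp [he, kdelta]
      · have hz0 : ∀ c : Fin C, α m' c z = 0 := fun c => by
          by_contra h
          exact hz (hsupp m' c h)
        rw [hl]
        simp only [hz0, mul_zero, Finset.sum_const_zero]
        rcases eq_or_ne m m' with he | he <;> simp [he, kdelta, hz, ← Prod.mk_zero_zero]
    · intro hop
      exact necessity C C α hop
  · intro M C α _ hop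
    exact necessity M C α hop
  · refine ⟨1, 1, fun _ _ => cef, fun _ _ => Set.Finite.subset (Finset.finite_toSet _) cef_supp,
      ?_, ?_⟩
    · intro m m'
      fin_cases m; fin_cases m'
      simp [Fin.sum_univ_one, cef_ip]
    · intro hop
      have h := congrFun (hop 0 0) ((0,1) : ℤ × ℤ)
      simp only [Fin.sum_univ_one, cef_corr] at h
      simp [kdelta] at h
end
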